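/- arXiv:1409.4723 — 3 statements merged into one kernel-verified Lean document; each statement's English description precedes it below -/
import Mathlib

section
/- Fix n ≥ 1, an n×n integer matrix B0, a word w = (k_1,…,k_m) with letters in {1,…,n}, and an index k ∈ {1,…,n}. Let B1 = μ_k(B0) and let k·w denote the word (k,k_1,…,k_m). Suppose that (D^{B0;w})^T = D^{(−B^{B0;w})^T; rev(w)} and that (D^{B1;k·w})^T = D^{(−B^{B1;k·w})^T; rev(k·w)}. Then D^{B1;k·w} = J_k · D^{B0;w} + max( [B0^{k•}]_+ · D^{B0;w}, [−B0^{k•}]_+ · D^{B0;w} ). -/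
open Matrix

/-- Entrywise positive part `[A]₊`. -/
def posPart {n : ℕ} (A : Matrix (Fin n) (Fin n) ℤ) : Matrix (Fin n) (Fin n) ℤ :=
  fun i j => max (A i j) 0

/-- Entrywise absolute value `|A|`. -/
def absMat {n : ℕ} (A : Matrix (Fin n) (Fin n) ℤ) : Matrix (Fin n) (Fin n) ℤ :=
  fun i j => |A i j|

/-- Entrywise maximum of two matrices. -/
def matMax {n : ℕ} (A B : Matrix (Fin n) (Fin n) ℤ) : Matrix (Fin n) (Fin n) ℤ :=
  fun i j => max (A i j) (B i j)

/-- `J k`: the identity matrix with the `(k,k)` entry replaced by `-1`. -/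
def Jmat {n : ℕ} (k : Fin n) : Matrix (Fin n) (Fin n) ℤ :=
  Matrix.diagonal (fun i => if i = k then -1 else 1)

/-- `A^{k•}`: the matrix agreeing with `A` in row `k` and zero elsewhere. -/
def rowSel {n : ℕ} (k : Fin n) (A : Matrix (Fin n) (Fin n) ℤ) : Matrix (Fin n) (Fin n) ℤ :=
  fun i j => if i = k then A i j else 0

/-- `A^{•k}`: the matrix agreeing with `A` in column `k` and zero elsewhere. -/
def colSel {n : ℕ} (k : Fin n) (A : Matrix (Fin n) (Fin n) ℤ) : Matrix (Fin n) (Fin n) ℤ :=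
  fun i j => if j = k then A i j else 0

/-- Fomin–Zelevinsky matrix mutation `μ_k`. -/
def mutB {n : ℕ} (k : Fin n) (B : Matrix (Fin n) (Fin n) ℤ) : Matrix (Fin n) (Fin n) ℤ :=
  fun i j =>
    if i = k ∨ j = k then -B i j
    else B i j + max (B i k) 0 * max (B k j) 0 - max (-B i k) 0 * max (-B k j) 0

/-- One step of the simultaneous `(B, D)` recursion along an edge labeled `k`:
`B` mutates and `D` evolves by the Fomin–Zelevinsky final-seed recursion for
denominator vectors. -/
def BDstep {n : ℕ} (s : Matrix (Fin n) (Fin n) ℤ × Matrix (Fin n) (Fin n) ℤ) (k : Fin n) :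
    Matrix (Fin n) (Fin n) ℤ × Matrix (Fin n) (Fin n) ℤ :=
  (mutB k s.1,
   s.2 * Jmat k + matMax (s.2 * posPart (colSel k s.1)) (s.2 * posPart (colSel k (-s.1))))

/-- The pair `(B^{B0;w}, D^{B0;w})` obtained from `(B0, -I)` by iterating along a word `w`. -/
def BDword {n : ℕ} (B0 : Matrix (Fin n) (Fin n) ℤ) (w : List (Fin n)) :
    Matrix (Fin n) (Fin n) ℤ × Matrix (Fin n) (Fin n) ℤ :=
  w.foldl BDstep (B0, -(1 : Matrix (Fin n) (Fin n) ℤ))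

/-- The exchange matrix `B^{B0;w}` at the end of the word `w`. -/
def Bword {n : ℕ} (B0 : Matrix (Fin n) (Fin n) ℤ) (w : List (Fin n)) :
    Matrix (Fin n) (Fin n) ℤ := (BDword B0 w).1

/-- The denominator matrix `D^{B0;w}` at the end of the word `w`. -/
def Dword {n : ℕ} (B0 : Matrix (Fin n) (Fin n) ℤ) (w : List (Fin n)) :
    Matrix (Fin n) (Fin n) ℤ := (BDword B0 w).2


section Aux

variable {n : ℕ}

lemma mutB_mutB (k : Fin n) (B : Matrix (Fin n) (Fin n) ℤ) :
    mutB k (mutB k B) = B := by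
  funext i j
  simp only [mutB]
  by_cases h : i = k ∨ j = k
  · simp [h]
  · push_neg at h
    simp [h.1, h.2]

lemma mutB_negT (k : Fin n) (B : Matrix (Fin n) (Fin n) ℤ) :
    mutB k (-Bᵀ) = -(mutB k B)ᵀ := by
  funext i j
  by_cases h : i = k ∨ j = k
  · have h' : j = k ∨ i = k := h.symm
    simp [mutB, h, h']
  · have h' : ¬ (j = k ∨ i = k) := fun hc => h hc.symm
    simp [mutB, h, h']
    ring

/-- Pure B-mutation along a word. -/
def Bfold (B0 : Matrix (Fin n) (Fin n) ℤ) (w : List (Fin n)) : Matrix (Fin n) (Fin n) ℤ :=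
  w.foldl (fun B k => mutB k B) B0

lemma BDword_fst (w : List (Fin n)) :
    ∀ s : Matrix (Fin n) (Fin n) ℤ × Matrix (Fin n) (Fin n) ℤ,
      (w.foldl BDstep s).1 = Bfold s.1 w := by
  induction w with
  | nil => intro s; rfl
  | cons a t ih =>
    intro s
    simp only [List.foldl_cons, ih, Bfold]
    rfl

lemma Bword_eq (B0 : Matrix (Fin n) (Fin n) ℤ) (w : List (Fin n)) :
    Bword B0 w = Bfold B0 w := BDword_fst w _

lemma Bfold_append (B0 : Matrix (Fin n) (Fin n) ℤ) (w : List (Fin n)) (k : Fin n) :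
    Bfold B0 (w ++ [k]) = mutB k (Bfold B0 w) := by
  simp [Bfold, List.foldl_append]

lemma Bfold_rev (w : List (Fin n)) :
    ∀ B0 : Matrix (Fin n) (Fin n) ℤ, Bfold (-(Bfold B0 w)ᵀ) w.reverse = -B0ᵀ := by
  induction w with
  | nil => intro B0; rfl
  | cons a t ih =>
    intro B0
    have h1 : Bfold B0 (a :: t) = Bfold (mutB a B0) t := rfl
    have h2 : (a :: t).reverse = t.reverse ++ [a] := by simp
    rw [h1, h2, Bfold_append, ih (mutB a B0), mutB_negT, mutB_mutB]

lemma Dword_append (B0 : Matrix (Fin n) (Fin n) ℤ) (w : List (Fin n)) (k : Fin n) :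
    Dword B0 (w ++ [k]) =
      Dword B0 w * Jmat k +
        matMax (Dword B0 w * posPart (colSel k (Bword B0 w)))
          (Dword B0 w * posPart (colSel k (-(Bword B0 w)))) := by
  simp only [Dword, Bword, BDword, List.foldl_append]
  rfl

lemma posPart_transpose (A : Matrix (Fin n) (Fin n) ℤ) :
    (posPart A)ᵀ = posPart Aᵀ := rfl

lemma matMax_transpose (A B : Matrix (Fin n) (Fin n) ℤ) :
    (matMax A B)ᵀ = matMax Aᵀ Bᵀ := rfl

lemma matMax_comm (A B : Matrix (Fin n) (Fin n) ℤ) :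
    matMax A B = matMax B A := by
  funext i j; exact max_comm _ _

lemma colSel_transpose (k : Fin n) (A : Matrix (Fin n) (Fin n) ℤ) :
    (colSel k A)ᵀ = rowSel k Aᵀ := rfl

lemma Jmat_transpose (k : Fin n) : (Jmat k)ᵀ = Jmat k := by
  simp [Jmat]

end Aux

/-- **Initial-seed-mutation recursion from duality (Proposition: D implies R).**
If D-matrix duality (Property D) holds at `(B0, w)` and at `(μ_k B0, k·w)`, then the
initial-seed-mutation recursion (Property R, equation (2)) holds at `(B0, w, k)`. -/
theorem initial_seed_recursion_of_duality {n : ℕ} (hn : 1 ≤ n)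
    (B0 : Matrix (Fin n) (Fin n) ℤ) (w : List (Fin n)) (k : Fin n)
    (h0 : (Dword B0 w)ᵀ = Dword (-(Bword B0 w))ᵀ w.reverse)
    (h1 : (Dword (mutB k B0) (k :: w))ᵀ =
      Dword (-(Bword (mutB k B0) (k :: w)))ᵀ (k :: w).reverse) :
    Dword (mutB k B0) (k :: w) =
      Jmat k * Dword B0 w +
        matMax (posPart (rowSel k B0) * Dword B0 w)
          (posPart (rowSel k (-B0)) * Dword B0 w) := by
  set D := Dword B0 w with hD
  set B1 := mutB k B0 with hB1
  -- The final B-matrix along k::w starting from B1 equals Bword B0 w.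
  have hBfinal : Bword B1 (k :: w) = Bword B0 w := by
    rw [Bword_eq, Bword_eq]
    show Bfold (mutB k B1) w = Bfold B0 w
    rw [hB1, mutB_mutB]
  have hrev : (k :: w).reverse = w.reverse ++ [k] := by simp
  -- The B-matrix after reversing from the final seed is -B0ᵀ.
  have hBrev : Bword (-(Bword B0 w))ᵀ w.reverse = -B0ᵀ := by
    rw [Bword_eq, Bword_eq]
    exact Bfold_rev w B0
  -- Use h1, splitting off the last letter of the reversed word.
  rw [hBfinal, hrev, Dword_append] at h1
  rw [hBrev, ← h0] at h1
  -- Transpose h1 back.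
  have h2 := congrArg Matrix.transpose h1
  rw [Matrix.transpose_transpose] at h2
  rw [h2]
  rw [Matrix.transpose_add, Matrix.transpose_mul, Jmat_transpose,
    Matrix.transpose_transpose, matMax_transpose, Matrix.transpose_mul,
    Matrix.transpose_mul, posPart_transpose, posPart_transpose,
    colSel_transpose, colSel_transpose, Matrix.transpose_transpose,
    Matrix.transpose_neg, Matrix.transpose_neg, Matrix.transpose_transpose]
  simp only [Matrix.transpose_neg, Matrix.transpose_transpose, neg_neg]
  rw [matMax_comm]
end

section
/- Fix n ≥ 1 and an n×n integer matrix B0. The following are equivalent: (1) (Property D) for every word u with letters in {1,…,n} and every word w with letters in {1,…,n}, writing B = B^{B0;u}, one has (D^{B;w})^T = D^{(−B^{B;w})^T; rev(w)}; (2) (Property R) for every word u, every word w = (k_1,…,k_m), and every index k ∈ {1,…,n}, writing B = B^{B0;u} and B' = μ_k(B), one has D^{B'; k·w} = J_k · D^{B;w} + max( [B^{k•}]_+ · D^{B;w}, [−B^{k•}]_+ · D^{B;w} ), where k·w = (k,k_1,…,k_m). -/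
open Matrix

/-!
Write `D̃^{B;w} := (D^{(-B^{B;w})ᵀ; rev w})ᵀ`. Along the reversed path the dual pattern starting at
`(-B^{B;w})ᵀ` runs through the exchange matrices `(-B')ᵀ` for the matrices `B'` met along `w`, so
transposing the final-seed recursion of its last step gives exactly the right-hand side of
Property R: `D̃` satisfies the initial-seed recursion unconditionally. Since `D̃^{B;[]} = D^{B;[]} = -I`,
Property R for `D` holds on the mutation class of `B0` iff `D` and `D̃` agree there, i.e. iff
Property D holds.
-/

/-- The right-hand side of Property R. -/
def initialSeedStep {n : ℕ} (k : Fin n) (B D : Matrix (Fin n) (Fin n) ℤ) :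
    Matrix (Fin n) (Fin n) ℤ :=
  Jmat k * D + matMax (posPart (rowSel k B) * D) (posPart (rowSel k (-B)) * D)

def dualDword {n : ℕ} (B : Matrix (Fin n) (Fin n) ℤ) (w : List (Fin n)) :
    Matrix (Fin n) (Fin n) ℤ :=
  (Dword (-Bword B w)ᵀ w.reverse)ᵀ

section

variable {n : ℕ}

lemma mutB_neg_transpose (k : Fin n) (B : Matrix (Fin n) (Fin n) ℤ) :
    mutB k (-B)ᵀ = (-mutB k B)ᵀ := by
  ext i j
  by_cases hi : i = k <;> by_cases hj : j = k <;> simp [mutB, hi, hj]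
  ring

lemma Bword_eq_foldl (B : Matrix (Fin n) (Fin n) ℤ) (w : List (Fin n)) :
    Bword B w = w.foldl (fun B k => mutB k B) B :=
  (List.foldl_hom Prod.fst (fun _ _ => rfl)).symm

@[simp]
lemma Bword_cons (k : Fin n) (B : Matrix (Fin n) (Fin n) ℤ) (w : List (Fin n)) :
    Bword B (k :: w) = Bword (mutB k B) w := by
  simp only [Bword_eq_foldl, List.foldl_cons]

@[simp]
lemma Bword_append_singleton (k : Fin n) (B : Matrix (Fin n) (Fin n) ℤ) (w : List (Fin n)) :
    Bword B (w ++ [k]) = mutB k (Bword B w) := by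
  simp only [Bword_eq_foldl, List.foldl_append, List.foldl_cons, List.foldl_nil]

lemma Bword_Bword_reverse (B : Matrix (Fin n) (Fin n) ℤ) (w : List (Fin n)) :
    Bword (Bword B w) w.reverse = B := by
  induction w generalizing B with
  | nil => rfl
  | cons k w ih => simp [ih, mutB_mutB]

lemma Bword_neg_transpose (B : Matrix (Fin n) (Fin n) ℤ) (w : List (Fin n)) :
    Bword (-B)ᵀ w = (-Bword B w)ᵀ := by
  induction w generalizing B with
  | nil => rfl
  | cons k w ih => simp only [Bword_cons, mutB_neg_transpose, ih]

lemma Dword_nil (B : Matrix (Fin n) (Fin n) ℤ) : Dword B [] = -1 := rfl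

lemma Dword_append_singleton (k : Fin n) (B : Matrix (Fin n) (Fin n) ℤ) (w : List (Fin n)) :
    Dword B (w ++ [k]) = (BDstep (Bword B w, Dword B w) k).2 := by
  simp only [Dword, Bword, BDword, List.foldl_append, List.foldl_cons, List.foldl_nil]

lemma transpose_BDstep_neg_transpose (k : Fin n) (B D : Matrix (Fin n) (Fin n) ℤ) :
    ((BDstep ((-B)ᵀ, D) k).2)ᵀ = initialSeedStep k B Dᵀ := by
  ext i j
  simp [BDstep, initialSeedStep, matMax, _root_.posPart, rowSel, colSel, Jmat, mul_apply,
    Matrix.transpose_apply, max_comm, mul_comm, diagonal_apply, eq_comm]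

lemma transpose_Dword_eq_iff (B : Matrix (Fin n) (Fin n) ℤ) (w : List (Fin n)) :
    (Dword B w)ᵀ = Dword (-Bword B w)ᵀ w.reverse ↔ Dword B w = dualDword B w := by
  rw [dualDword, ← transpose_inj, transpose_transpose]

lemma dualDword_nil (B : Matrix (Fin n) (Fin n) ℤ) : dualDword B [] = -1 := by
  simp [dualDword, Dword_nil]

lemma dualDword_mutB_cons (k : Fin n) (B : Matrix (Fin n) (Fin n) ℤ) (w : List (Fin n)) :
    dualDword (mutB k B) (k :: w) = initialSeedStep k B (dualDword B w) := by
  rw [dualDword, dualDword, Bword_cons, mutB_mutB, List.reverse_cons, Dword_append_singleton,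
    Bword_neg_transpose, Bword_Bword_reverse, transpose_BDstep_neg_transpose]

end

theorem propertyD_iff_propertyR_general {n : ℕ} (B0 : Matrix (Fin n) (Fin n) ℤ) :
    (∀ u w : List (Fin n),
        (Dword (Bword B0 u) w)ᵀ = Dword (-(Bword (Bword B0 u) w))ᵀ w.reverse) ↔
    (∀ u w : List (Fin n), ∀ k : Fin n,
        Dword (mutB k (Bword B0 u)) (k :: w) =
          Jmat k * Dword (Bword B0 u) w +
            matMax (posPart (rowSel k (Bword B0 u)) * Dword (Bword B0 u) w)
              (posPart (rowSel k (-(Bword B0 u))) * Dword (Bword B0 u) w)) := by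
  change (∀ u w, _) ↔ ∀ u w k, _ = initialSeedStep k _ _
  simp only [transpose_Dword_eq_iff]
  constructor
  · intro hD u w k
    have hD_mut := hD (u ++ [k]) (k :: w)
    rw [Bword_append_singleton] at hD_mut
    rw [hD_mut, dualDword_mutB_cons, hD u w]
  · intro hR u w
    induction w generalizing u with
    | nil => exact (dualDword_nil _).symm
    | cons k w ih =>
      have hB : mutB k (Bword B0 (u ++ [k])) = Bword B0 u := by
        rw [Bword_append_singleton, mutB_mutB]
      rw [← hB, hR, ih, dualDword_mutB_cons]

/-- **Theorem (equivalence of Properties D and R).**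
Fix `n ≥ 1` and an `n×n` integer exchange matrix `B0`.  Property D (D-matrix duality,
for all choices of initial vertex `u` and target word `w`) holds if and only if
Property R (the initial-seed-mutation recursion, for all `u`, `w`, `k`) holds. -/
theorem propertyD_iff_propertyR {n : ℕ} (hn : 1 ≤ n) (B0 : Matrix (Fin n) (Fin n) ℤ) :
    (∀ u w : List (Fin n),
        (Dword (Bword B0 u) w)ᵀ = Dword (-(Bword (Bword B0 u) w))ᵀ w.reverse) ↔
    (∀ u w : List (Fin n), ∀ k : Fin n,
        Dword (mutB k (Bword B0 u)) (k :: w) =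
          Jmat k * Dword (Bword B0 u) w +
            matMax (posPart (rowSel k (Bword B0 u)) * Dword (Bword B0 u) w)
              (posPart (rowSel k (-(Bword B0 u))) * Dword (Bword B0 u) w)) :=
  propertyD_iff_propertyR_general B0
end

section
/- Fix n ≥ 1 and an n×n integer matrix B0. Suppose the seed (B_t,(x_{1;t},…,x_{n;t})) at a vertex t is reached from the initial seed (B0,(x_1,…,x_n)) along some word, with all cluster variables encountered nonzero, and let t' be obtained from t by one further mutation in direction k ∈ {1,…,n}, with cluster variables x_{j;t'} (so x_{j;t'} = x_{j;t} for j ≠ k). Suppose p_1,…,p_n are Laurent expansions of x_{1;t},…,x_{n;t} with respect to the initial cluster (x_1,…,x_n), and p'_k is a Laurent expansion of x_{k;t'} with respect to the initial cluster. Then for every i ∈ {1,…,n}: m_i(p'_k) = −m_i(p_k) + max( Σ_ℓ m_i(p_ℓ)·[(B_t)_{ℓk}]_+ , Σ_ℓ m_i(p_ℓ)·[−(B_t)_{ℓk}]_+ ). In particular, writing M_t for the matrix with (i,j)-entry m_i(p_j), the M-matrices satisfy M_{t'} = M_t·J_k + max( M_t·[(B_t)^{•k}]_+, M_t·[(−B_t)^{•k}]_+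 ), with initial condition M_{t_0} equal to the identity matrix. -/
open Matrix

/-- The ambient field `K = Frac(ℚ[x₁,…,xₙ])` of rational functions in `n` variables. -/
abbrev K (n : ℕ) := FractionRing (MvPolynomial (Fin n) ℚ)

/-- The initial cluster: the images `x₁,…,xₙ` of the polynomial variables in `K`. -/
noncomputable def xinit (n : ℕ) : Fin n → K n :=
  fun i => algebraMap (MvPolynomial (Fin n) ℚ) (K n) (MvPolynomial.X i)

/-- Laurent polynomials in `n` variables over `ℚ`: the monoid algebra `ℚ[ℤ^n]`. -/
abbrev LaurentPoly (n : ℕ) := AddMonoidAlgebra ℚ (Fin n →₀ ℤ)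

/-- Evaluation of a Laurent polynomial at a tuple `u` of elements of `K`
(negative exponents use inversion in the field `K`). -/
noncomputable def lEval {n : ℕ} (u : Fin n → K n) (p : LaurentPoly n) : K n :=
  p.coeff.sum fun d c => c • ∏ l, u l ^ (d l)

/-- `p` is a Laurent expansion of `z` with respect to the tuple `u`. -/
def IsLaurentExpansion {n : ℕ} (u : Fin n → K n) (p : LaurentPoly n) (z : K n) : Prop :=
  lEval u p = z

/-- For a nonzero Laurent polynomial `p`, the maximal exponent of the `i`-th variable
(`m_i(p)`, the `i`-th entry of the m-vector). -/
noncomputable def maxExp {n : ℕ} (p : LaurentPoly n) (hp : p ≠ 0) (i : Fin n) : ℤ :=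
  p.coeff.support.sup' (Finsupp.support_nonempty_iff.mpr
    (fun h => hp (by rw [← AddMonoidAlgebra.ofCoeff_coeff p, h]; rfl))) fun d => d i

/-- For a nonzero Laurent polynomial `p`, the minimal exponent of the `i`-th variable
(its negative is the `i`-th entry of the d-vector). -/
noncomputable def minExp {n : ℕ} (p : LaurentPoly n) (hp : p ≠ 0) (i : Fin n) : ℤ :=
  p.coeff.support.inf' (Finsupp.support_nonempty_iff.mpr
    (fun h => hp (by rw [← AddMonoidAlgebra.ofCoeff_coeff p, h]; rfl))) fun d => d i

/-- The new cluster variable produced by the exchange relation in direction `k`: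
`x'_k = (∏ u_ℓ^{[B_{ℓk}]₊} + ∏ u_ℓ^{[-B_{ℓk}]₊}) / u_k`. -/
noncomputable def exch {n : ℕ} (k : Fin n) (B : Matrix (Fin n) (Fin n) ℤ)
    (u : Fin n → K n) : K n :=
  ((∏ l, u l ^ (max (B l k) 0).toNat) + ∏ l, u l ^ (max (-B l k) 0).toNat) / u k

/-- Mutation of a labeled (coefficient-free) seed in direction `k`. -/
noncomputable def seedMut {n : ℕ} (s : Matrix (Fin n) (Fin n) ℤ × (Fin n → K n))
    (k : Fin n) : Matrix (Fin n) (Fin n) ℤ × (Fin n → K n) :=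
  (mutB k s.1, Function.update s.2 k (exch k s.1 s.2))

/-- The seed reached from the initial seed `(B0, (x₁,…,xₙ))` along the word `w`. -/
noncomputable def seedAt {n : ℕ} (B0 : Matrix (Fin n) (Fin n) ℤ) (w : List (Fin n)) :
    Matrix (Fin n) (Fin n) ℤ × (Fin n → K n) :=
  w.foldl seedMut (B0, xinit n)

/-!
Fix `i` and order exponents lexicographically with the `i`-th coordinate first, so that the
`i`-th coordinate of the leading exponent of a Laurent polynomial is `m_i`. Laurent polynomials
with positive leading coefficient are closed under sums and products, and their leading terms
never cancel. Every cluster variable is a subtraction-free rational expression in the initial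
cluster, hence a quotient of two such polynomials, so each of its Laurent expansions has a
positive leading coefficient too. Since evaluation at the initial cluster is injective on Laurent
polynomials, the exchange relation `p' * p_k = ∏ p_l ^ [b_lk]₊ + ∏ p_l ^ [-b_lk]₊` holds for the
expansions themselves, and comparing leading exponents of both sides gives the recursion. The
expansion of `x_j` is the monomial `x_j`, which gives the initial condition.
-/

open Function

namespace AddMonoidAlgebra

variable {R A B : Type*} [AddCommMonoid A] [AddCommMonoid B] [LinearOrder B] {D : A →+ B}

section Semiring

variable [Semiring R] {q r : R[A]} {a b : A}

def IsLeadExp (D : A →+ B) (q : R[A]) (a : A) : Prop :=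
  a ∈ q.coeff.support ∧ ∀ b ∈ q.coeff.support, D b ≤ D a

theorem exists_isLeadExp (D : A →+ B) (hq : q ≠ 0) : ∃ a, IsLeadExp D q a :=
  q.coeff.support.exists_max_image D
    (Finsupp.support_nonempty_iff.2 (mt coeff_eq_zero.1 hq))

theorem isLeadExp_single {c : R} (hc : c ≠ 0) : IsLeadExp D (single a c) a := by
  refine ⟨by simpa [coeff_single] using hc, fun b hb => ?_⟩
  rw [coeff_single, Finsupp.support_single _ hc, Finset.mem_singleton] at hb
  rw [hb]

theorem IsLeadExp.unique (hD : Injective D) (ha : IsLeadExp D q a)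
    (hb : IsLeadExp D q b) : a = b :=
  hD (le_antisymm (hb.2 a ha.1) (ha.2 b hb.1))

variable [IsOrderedCancelAddMonoid B]

theorem IsLeadExp.uniqueAdd (hD : Injective D) (hq : IsLeadExp D q a)
    (hr : IsLeadExp D r b) : UniqueAdd q.coeff.support r.coeff.support a b := by
  intro a' b' ha' hb' h
  have h' := (add_eq_add_iff_eq_and_eq (hq.2 a' ha') (hr.2 b' hb')).1
    (by rw [← map_add, ← map_add, h])
  exact ⟨hD h'.1, hD h'.2⟩

theorem IsLeadExp.coeff_mul (hD : Injective D) (hq : IsLeadExp D q a)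
    (hr : IsLeadExp D r b) : (q * r).coeff (a + b) = q.coeff a * r.coeff b :=
  coeff_mul_add_of_uniqueAdd (hq.uniqueAdd hD hr)

theorem IsLeadExp.mul (hD : Injective D) (hq : IsLeadExp D q a) (hr : IsLeadExp D r b)
    (h : q.coeff a * r.coeff b ≠ 0) : IsLeadExp D (q * r) (a + b) := by
  classical
  refine ⟨by rwa [Finsupp.mem_support_iff, hq.coeff_mul hD hr], fun c hc => ?_⟩
  obtain ⟨a', ha', b', hb', rfl⟩ := Finset.mem_add.1 (support_coeff_mul_subset q r hc)
  rw [map_add, map_add]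
  exact add_le_add (hq.2 a' ha') (hr.2 b' hb')

end Semiring

section Ordered

variable [CommSemiring R] [PartialOrder R] {q r : R[A]} {a b : A}

def IsPosLeadExp (D : A →+ B) (q : R[A]) (a : A) : Prop :=
  IsLeadExp D q a ∧ 0 < q.coeff a

def HasPosLead (D : A →+ B) (q : R[A]) : Prop :=
  ∃ a, IsPosLeadExp D q a

theorem HasPosLead.ne_zero (h : HasPosLead D q) : q ≠ 0 := by
  rintro rfl
  obtain ⟨a, -, ha⟩ := h
  simp at ha

theorem isPosLeadExp_single {c : R} (hc : 0 < c) : IsPosLeadExp D (single a c) a :=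
  ⟨isLeadExp_single hc.ne', by simpa [coeff_single] using hc⟩

variable [IsStrictOrderedRing R]

theorem isPosLeadExp_one : IsPosLeadExp D (1 : R[A]) 0 :=
  isPosLeadExp_single one_pos

theorem IsPosLeadExp.add_of_le (hD : Injective D) (hq : IsPosLeadExp D q a)
    (hr : IsPosLeadExp D r b) (hab : D a ≤ D b) : IsPosLeadExp D (q + r) b := by
  classical
  have hqb : 0 ≤ q.coeff b := by
    by_cases hb : b ∈ q.coeff.support
    · rw [hD (le_antisymm (hq.1.2 b hb) hab)]
      exact hq.2.le
    · rw [Finsupp.notMem_support_iff.1 hb]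
  have hpos : 0 < (q + r).coeff b := by
    rw [coeff_add, Finsupp.add_apply]
    exact add_pos_of_nonneg_of_pos hqb hr.2
  refine ⟨⟨Finsupp.mem_support_iff.2 hpos.ne', fun c hc => ?_⟩, hpos⟩
  rcases Finset.mem_union.1 (Finsupp.support_add (by simpa [coeff_add] using hc)) with hc | hc
  · exact (hq.1.2 c hc).trans hab
  · exact hr.1.2 c hc

theorem HasPosLead.add (hD : Injective D) (hq : HasPosLead D q) (hr : HasPosLead D r) :
    HasPosLead D (q + r) := by
  obtain ⟨a, ha⟩ := hq
  obtain ⟨b, hb⟩ := hr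
  rcases le_total (D a) (D b) with hab | hba
  · exact ⟨b, ha.add_of_le hD hb hab⟩
  · exact ⟨a, add_comm q r ▸ hb.add_of_le hD ha hba⟩

variable [IsOrderedCancelAddMonoid B]

theorem IsPosLeadExp.mul (hD : Injective D) (hq : IsPosLeadExp D q a)
    (hr : IsPosLeadExp D r b) : IsPosLeadExp D (q * r) (a + b) := by
  have hpos := mul_pos hq.2 hr.2
  exact ⟨hq.1.mul hD hr.1 hpos.ne', by rwa [hq.1.coeff_mul hD hr.1]⟩

theorem IsPosLeadExp.pow (hD : Injective D) (hq : IsPosLeadExp D q a) (m : ℕ) :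
    IsPosLeadExp D (q ^ m) (m • a) := by
  induction m with
  | zero => simpa using isPosLeadExp_one
  | succ m ih => simpa [pow_succ, succ_nsmul] using ih.mul hD hq

theorem IsPosLeadExp.prod {ι : Type*} (hD : Injective D) {s : Finset ι}
    {q : ι → R[A]} {a : ι → A} (h : ∀ i ∈ s, IsPosLeadExp D (q i) (a i)) :
    IsPosLeadExp D (∏ i ∈ s, q i) (∑ i ∈ s, a i) := by
  induction s using Finset.cons_induction with
  | empty => simpa using isPosLeadExp_one
  | cons j s hj ih =>
    rw [Finset.prod_cons, Finset.sum_cons]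
    exact (h j (Finset.mem_cons_self j s)).mul hD
      (ih fun i hi => h i (Finset.mem_cons_of_mem hi))

theorem HasPosLead.mul (hD : Injective D) (hq : HasPosLead D q) (hr : HasPosLead D r) :
    HasPosLead D (q * r) :=
  let ⟨_, ha⟩ := hq
  let ⟨_, hb⟩ := hr
  ⟨_, ha.mul hD hb⟩

end Ordered

theorem HasPosLead.of_mul_right [IsOrderedCancelAddMonoid B] [CommRing R] [LinearOrder R]
    [IsStrictOrderedRing R] {q g : R[A]} (hD : Injective D) (hq : q ≠ 0)
    (hg : HasPosLead D g) (hqg : HasPosLead D (q * g)) : HasPosLead D q := by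
  obtain ⟨a, ha⟩ := exists_isLeadExp D hq
  obtain ⟨b, hb, hb0⟩ := hg
  obtain ⟨c, hc, hc0⟩ := hqg
  have hne : q.coeff a * g.coeff b ≠ 0 := mul_ne_zero (Finsupp.mem_support_iff.1 ha.1) hb0.ne'
  rw [← (ha.mul hD hb hne).unique hD hc, ha.coeff_mul hD hb] at hc0
  exact ⟨a, ha, pos_of_mul_pos_left hc0 hb0.le⟩

end AddMonoidAlgebra

open AddMonoidAlgebra

section LexFirst

variable {σ : Type*} {i : σ}

def lexFirst (i : σ) : (σ →₀ ℤ) →+ ℤ ×ₗ Lex (σ →₀ ℤ) where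
  toFun d := toLex (d i, toLex d)
  map_zero' := rfl
  map_add' _ _ := rfl

theorem lexFirst_injective (i : σ) : Injective (lexFirst i) :=
  fun _ _ h => toLex.injective (congrArg (fun x => (ofLex x).2) h)

variable [LinearOrder σ]

theorem apply_le_of_lexFirst_le {a b : σ →₀ ℤ} (h : lexFirst i a ≤ lexFirst i b) : a i ≤ b i :=
  Prod.Lex.monotone_fst _ _ h

theorem AddMonoidAlgebra.IsPosLeadExp.exists_add_lexFirst {R : Type*} [CommSemiring R]
    [PartialOrder R] [IsStrictOrderedRing R] {q r : R[σ →₀ ℤ]} {a b : σ →₀ ℤ}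
    (hq : IsPosLeadExp (lexFirst i) q a) (hr : IsPosLeadExp (lexFirst i) r b) :
    ∃ c, IsPosLeadExp (lexFirst i) (q + r) c ∧ c i = max (a i) (b i) := by
  rcases le_total (lexFirst i a) (lexFirst i b) with hab | hba
  · exact ⟨b, hq.add_of_le (lexFirst_injective i) hr hab,
      (max_eq_right (apply_le_of_lexFirst_le hab)).symm⟩
  · exact ⟨a, add_comm q r ▸ hr.add_of_le (lexFirst_injective i) hq hba,
      (max_eq_left (apply_le_of_lexFirst_le hba)).symm⟩

end LexFirst

theorem maxExp_eq_of_isLeadExp {n : ℕ} {q : LaurentPoly n} (hq : q ≠ 0) {i : Fin n}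
    {a : Fin n →₀ ℤ} (ha : IsLeadExp (lexFirst i) q a) : maxExp q hq i = a i :=
  le_antisymm (Finset.sup'_le _ _ fun b hb => apply_le_of_lexFirst_le (ha.2 b hb))
    (Finset.le_sup' (fun b : Fin n →₀ ℤ => b i) ha.1)

section LaurentEval

variable {n : ℕ}

theorem xinit_ne_zero (l : Fin n) : xinit n l ≠ 0 :=
  (map_ne_zero_iff _ (IsFractionRing.injective (MvPolynomial (Fin n) ℚ) (K n))).2
    (MvPolynomial.X_ne_zero l)

variable (n) in
noncomputable def laurentEval : LaurentPoly n →ₐ[ℚ] K n :=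
  lift ℚ (K n) (Fin n →₀ ℤ)
    { toFun := fun d => ∏ l, xinit n l ^ (d.toAdd l)
      map_one' := by simp
      map_mul' := fun d e => by
        simp only [toAdd_mul, Finsupp.add_apply, zpow_add₀ (xinit_ne_zero _),
          Finset.prod_mul_distrib] }

theorem laurentEval_single_one (d : Fin n →₀ ℤ) :
    laurentEval n (single d 1) = ∏ l, xinit n l ^ d l := by
  rw [laurentEval, lift_single, Algebra.smul_def, map_one, one_mul]
  rfl

theorem laurentEval_single_single_one (j : Fin n) :
    laurentEval n (single (Finsupp.single j 1) 1) = xinit n j := by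
  rw [laurentEval_single_one, Finset.prod_eq_single j (fun l _ hl => by simp [hl]) (by simp)]
  simp

-- The `ℚ`-action in `lEval` comes from the scalar tower `ℚ → MvPolynomial (Fin n) ℚ → K n`; it is
-- not definitionally the action of `DivisionRing.toRatAlgebra` that `lift` uses.
theorem rat_smul_eq_algebraMap_mul (c : ℚ) (x : K n) : c • x = algebraMap ℚ (K n) c * x := by
  rw [← IsScalarTower.algebraMap_smul (MvPolynomial (Fin n) ℚ) c x, Algebra.smul_def,
    ← IsScalarTower.algebraMap_apply]

theorem lEval_xinit (q : LaurentPoly n) : lEval (xinit n) q = laurentEval n q := by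
  rw [lEval, laurentEval, lift_apply]
  refine Finsupp.sum_congr fun d _ => ?_
  rw [rat_smul_eq_algebraMap_mul, Algebra.smul_def]
  rfl

variable (n) in
noncomputable def polyToLaurent : MvPolynomial (Fin n) ℚ →ₐ[ℚ] LaurentPoly n :=
  mapDomainAlgHom ℚ ℚ (Finsupp.mapRange.addMonoidHom (Nat.castAddMonoidHom ℤ))

theorem laurentEval_polyToLaurent (f : MvPolynomial (Fin n) ℚ) :
    laurentEval n (polyToLaurent n f) = algebraMap (MvPolynomial (Fin n) ℚ) (K n) f := by
  have h : (laurentEval n).toRingHom.comp (polyToLaurent n).toRingHom =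
      algebraMap (MvPolynomial (Fin n) ℚ) (K n) :=
    MvPolynomial.ringHom_ext' (RingHom.ext_rat _ _) fun j => by
      have hX : polyToLaurent n (MvPolynomial.X j) = single (Finsupp.single j 1) 1 := by
        simp [polyToLaurent, MvPolynomial.X, MvPolynomial.monomial]
      exact (congrArg (laurentEval n) hX).trans (laurentEval_single_single_one j)
  exact RingHom.congr_fun h f

theorem isUnit_single_one (d : Fin n →₀ ℤ) : IsUnit (single d (1 : ℚ)) :=
  IsUnit.of_mul_eq_one (single (-d) 1) (by rw [single_mul_single, add_neg_cancel, mul_one]; rfl)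

theorem exists_mul_polyToLaurent_eq (q : LaurentPoly n) : ∃ m f : MvPolynomial (Fin n) ℚ,
    IsUnit (polyToLaurent n m) ∧ q * polyToLaurent n m = polyToLaurent n f := by
  induction q using induction_linear with
  | zero => exact ⟨1, 0, by simp, by simp⟩
  | add q₁ q₂ ih₁ ih₂ =>
    obtain ⟨m₁, f₁, hm₁, h₁⟩ := ih₁
    obtain ⟨m₂, f₂, hm₂, h₂⟩ := ih₂
    refine ⟨m₁ * m₂, f₁ * m₂ + f₂ * m₁, by simpa using hm₁.mul hm₂, ?_⟩
    simp only [map_mul, map_add]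
    linear_combination polyToLaurent n m₂ * h₁ + polyToLaurent n m₁ * h₂
  | single d c =>
    refine ⟨MvPolynomial.monomial (d.mapRange (fun z => (-z).toNat) (by simp)) 1,
      MvPolynomial.monomial (d.mapRange Int.toNat (by simp)) c, ?_, ?_⟩
    · simpa [polyToLaurent, MvPolynomial.monomial] using isUnit_single_one _
    · simp only [polyToLaurent, MvPolynomial.monomial, mapDomainAlgHom_apply]
      rw [lsingle_apply, lsingle_apply, mapDomain_single, mapDomain_single, single_mul_single,
        mul_one]
      congr 1
      ext l
      simp
      omega

theorem laurentEval_injective : Injective (laurentEval n) := by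
  rw [injective_iff_map_eq_zero]
  intro q hq
  obtain ⟨m, f, hm, hqm⟩ := exists_mul_polyToLaurent_eq q
  have hf : algebraMap (MvPolynomial (Fin n) ℚ) (K n) f = 0 := by
    rw [← laurentEval_polyToLaurent, ← hqm, map_mul, hq, zero_mul]
  rw [(map_eq_zero_iff _ (IsFractionRing.injective _ _)).1 hf, map_zero] at hqm
  exact hm.mul_left_eq_zero.1 hqm

end LaurentEval

section PosQuotient

variable {n : ℕ} {B : Type*} [AddCommMonoid B] [LinearOrder B] {D : (Fin n →₀ ℤ) →+ B}

def IsPosQuotient (D : (Fin n →₀ ℤ) →+ B) (x : K n) : Prop :=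
  ∃ f g : LaurentPoly n, HasPosLead D f ∧ HasPosLead D g ∧ x * laurentEval n g = laurentEval n f

theorem isPosQuotient_laurentEval {f : LaurentPoly n} (hf : HasPosLead D f) :
    IsPosQuotient D (laurentEval n f) :=
  ⟨f, 1, hf, ⟨0, isPosLeadExp_one⟩, by rw [map_one, mul_one]⟩

theorem isPosQuotient_xinit (j : Fin n) : IsPosQuotient D (xinit n j) :=
  laurentEval_single_single_one j ▸ isPosQuotient_laurentEval ⟨_, isPosLeadExp_single one_pos⟩

theorem IsPosQuotient.ne_zero {x : K n} (hx : IsPosQuotient D x) : x ≠ 0 := by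
  rintro rfl
  obtain ⟨f, g, hf, -, h⟩ := hx
  exact hf.ne_zero (laurentEval_injective (by rw [← h, zero_mul, map_zero]))

variable [IsOrderedCancelAddMonoid B] (hD : Injective D)
include hD

theorem IsPosQuotient.mul {x y : K n} (hx : IsPosQuotient D x) (hy : IsPosQuotient D y) :
    IsPosQuotient D (x * y) := by
  obtain ⟨f₁, g₁, hf₁, hg₁, h₁⟩ := hx
  obtain ⟨f₂, g₂, hf₂, hg₂, h₂⟩ := hy
  refine ⟨f₁ * f₂, g₁ * g₂, hf₁.mul hD hf₂, hg₁.mul hD hg₂, ?_⟩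
  rw [map_mul, map_mul, ← h₁, ← h₂]
  ring

theorem IsPosQuotient.add {x y : K n} (hx : IsPosQuotient D x) (hy : IsPosQuotient D y) :
    IsPosQuotient D (x + y) := by
  obtain ⟨f₁, g₁, hf₁, hg₁, h₁⟩ := hx
  obtain ⟨f₂, g₂, hf₂, hg₂, h₂⟩ := hy
  refine ⟨f₁ * g₂ + f₂ * g₁, g₁ * g₂, (hf₁.mul hD hg₂).add hD (hf₂.mul hD hg₁),
    hg₁.mul hD hg₂, ?_⟩
  rw [map_add, map_mul, map_mul, map_mul, ← h₁, ← h₂]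
  ring

theorem IsPosQuotient.div {x y : K n} (hx : IsPosQuotient D x) (hy : IsPosQuotient D y) :
    IsPosQuotient D (x / y) := by
  have hy0 := hy.ne_zero
  obtain ⟨f₁, g₁, hf₁, hg₁, h₁⟩ := hx
  obtain ⟨f₂, g₂, hf₂, hg₂, h₂⟩ := hy
  refine ⟨f₁ * g₂, g₁ * f₂, hf₁.mul hD hg₂, hg₁.mul hD hf₂, ?_⟩
  rw [map_mul, map_mul, ← h₁, ← h₂]
  field_simp

theorem IsPosQuotient.prod_pow {u : Fin n → K n} (hu : ∀ l, IsPosQuotient D (u l))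
    (m : Fin n → ℕ) : IsPosQuotient D (∏ l, u l ^ m l) := by
  refine Finset.prod_induction _ _ (fun _ _ => IsPosQuotient.mul hD) ?_ fun l _ => ?_
  · simpa using isPosQuotient_laurentEval (D := D) ⟨0, isPosLeadExp_one⟩
  · induction m l with
    | zero => simpa using isPosQuotient_laurentEval (D := D) ⟨0, isPosLeadExp_one⟩
    | succ k ih => simpa [pow_succ] using ih.mul hD (hu l)

theorem isPosQuotient_foldl_seedMut (w : List (Fin n))
    (s : Matrix (Fin n) (Fin n) ℤ × (Fin n → K n)) (hs : ∀ l, IsPosQuotient D (s.2 l))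
    (l : Fin n) :
    IsPosQuotient D ((w.foldl seedMut s).2 l) := by
  induction w generalizing s with
  | nil => exact hs l
  | cons k w ih =>
    refine ih _ fun l => ?_
    by_cases hl : l = k
    · subst hl
      simpa [seedMut, exch] using
        ((IsPosQuotient.prod_pow hD hs _).add hD (IsPosQuotient.prod_pow hD hs _)).div hD (hs l)
    · simpa [seedMut, hl] using hs l

theorem isPosQuotient_seedAt (B0 : Matrix (Fin n) (Fin n) ℤ) (w : List (Fin n)) (l : Fin n) :
    IsPosQuotient D ((seedAt B0 w).2 l) :=
  isPosQuotient_foldl_seedMut hD w _ isPosQuotient_xinit l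

theorem hasPosLead_of_isLaurentExpansion {q : LaurentPoly n} {z : K n} (hq : q ≠ 0)
    (h : IsLaurentExpansion (xinit n) q z) (hz : IsPosQuotient D z) : HasPosLead D q := by
  obtain ⟨f, g, hf, hg, hzfg⟩ := hz
  have hqg : q * g = f := laurentEval_injective (by
    rw [map_mul, ← lEval_xinit, h, hzfg])
  exact HasPosLead.of_mul_right hD hq hg (hqg ▸ hf)

end PosQuotient

theorem maxExp_eq_of_mul_eq_add {n : ℕ} {i k : Fin n} {p : Fin n → LaurentPoly n}
    {p' : LaurentPoly n} (hp : ∀ l, HasPosLead (lexFirst i) (p l)) (hp0 : ∀ l, p l ≠ 0)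
    (hp'0 : p' ≠ 0) {a c : Fin n → ℕ} (h : p' * p k = ∏ l, p l ^ a l + ∏ l, p l ^ c l) :
    maxExp p' hp'0 i = -maxExp (p k) (hp0 k) i +
      max (∑ l, maxExp (p l) (hp0 l) i * a l) (∑ l, maxExp (p l) (hp0 l) i * c l) := by
  have hD := lexFirst_injective i
  choose e he using hp
  have hm : ∀ l, maxExp (p l) (hp0 l) i = e l i := fun l => maxExp_eq_of_isLeadExp _ (he l).1
  obtain ⟨d, hd, hdi⟩ := (IsPosLeadExp.prod hD fun l _ => (he l).pow hD (a l)).exists_add_lexFirst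
    (IsPosLeadExp.prod hD fun l _ => (he l).pow hD (c l))
  obtain ⟨e', he'⟩ := exists_isLeadExp (lexFirst i) hp'0
  have hlead := he'.mul hD (he k).1 (mul_ne_zero (Finsupp.mem_support_iff.1 he'.1) (he k).2.ne')
  rw [h] at hlead
  have hsum := congrArg (· i) (hlead.unique hD hd.1)
  simp only [Finsupp.add_apply, Finsupp.finsetSum_apply, Finsupp.smul_apply, nsmul_eq_mul]
    at hdi hsum
  simp only [maxExp_eq_of_isLeadExp hp'0 he', hm, mul_comm (e _ i)]
  omega

theorem mul_eq_exchange_of_isLaurentExpansion {n : ℕ}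
    {s : Matrix (Fin n) (Fin n) ℤ × (Fin n → K n)} {k : Fin n} {p : Fin n → LaurentPoly n}
    {p' : LaurentPoly n} (hp : ∀ l, IsLaurentExpansion (xinit n) (p l) (s.2 l))
    (hp' : IsLaurentExpansion (xinit n) p' ((seedMut s k).2 k)) (hpk : p k ≠ 0) :
    p' * p k = ∏ l, p l ^ (max (s.1 l k) 0).toNat + ∏ l, p l ^ (max (-s.1 l k) 0).toNat := by
  have hu : ∀ l, laurentEval n (p l) = s.2 l := fun l => (lEval_xinit _).symm.trans (hp l)
  have hk : s.2 k ≠ 0 := hu k ▸ (map_ne_zero_iff _ laurentEval_injective).2 hpk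
  have hu' : laurentEval n p' = exch k s.1 s.2 := by
    rw [← lEval_xinit, ← update_self k (exch k s.1 s.2) s.2]
    exact hp'
  apply laurentEval_injective
  simp only [map_mul, map_add, map_prod, map_pow, hu, hu', exch]
  field_simp

theorem mvector_final_seed_recursion_general {n : ℕ}
    (B0 : Matrix (Fin n) (Fin n) ℤ) (w : List (Fin n)) (k : Fin n)
    (p : Fin n → LaurentPoly n) (p' : LaurentPoly n)
    (hp : ∀ l, IsLaurentExpansion (xinit n) (p l) ((seedAt B0 w).2 l))
    (hp' : IsLaurentExpansion (xinit n) p' ((seedMut (seedAt B0 w) k).2 k))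
    (hp0 : ∀ l, p l ≠ 0) (hp'0 : p' ≠ 0) :
    (∀ i : Fin n,
        maxExp p' hp'0 i =
          -maxExp (p k) (hp0 k) i +
            max (∑ l, maxExp (p l) (hp0 l) i * max ((seedAt B0 w).1 l k) 0)
              (∑ l, maxExp (p l) (hp0 l) i * max (-(seedAt B0 w).1 l k) 0)) ∧
    (∀ (r : Fin n → LaurentPoly n) (hr0 : ∀ j, r j ≠ 0),
        (∀ j, IsLaurentExpansion (xinit n) (r j) (xinit n j)) →
        ∀ i j, maxExp (r j) (hr0 j) i = if i = j then 1 else 0) := by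
  refine ⟨fun i => ?_, fun r hr0 hr i j => ?_⟩
  · have hpos : ∀ l, HasPosLead (lexFirst i) (p l) := fun l =>
      hasPosLead_of_isLaurentExpansion (lexFirst_injective i) (hp0 l) (hp l)
        (isPosQuotient_seedAt (lexFirst_injective i) B0 w l)
    simpa only [Int.toNat_of_nonneg (le_max_right _ _)] using
      maxExp_eq_of_mul_eq_add hpos hp0 hp'0 (mul_eq_exchange_of_isLaurentExpansion hp hp' (hp0 k))
  · have hrj : r j = single (Finsupp.single j 1) 1 :=
      laurentEval_injective (by rw [← lEval_xinit, hr j, laurentEval_single_single_one])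
    rw [maxExp_eq_of_isLeadExp (hr0 j) (hrj ▸ isLeadExp_single one_ne_zero)]
    simp [Finsupp.single_apply, eq_comm]

/-- **Proposition (final-seed recursion for m-vectors).**
Let the seed at `t` be reached from the initial seed `(B0,(x₁,…,xₙ))` along a word `w`
(with all cluster variables along the way nonzero), and let `t'` be obtained from `t` by
one further mutation in direction `k`.  If `p ℓ` is a Laurent expansion of `x_{ℓ;t}` and
`p'` is a Laurent expansion of `x_{k;t'}`, all with respect to the initial cluster, then
for every `i`:
`m_i(p') = -m_i(p k) + max( Σ_ℓ m_i(p ℓ)·[(B_t)_{ℓk}]₊ , Σ_ℓ m_i(p ℓ)·[-(B_t)_{ℓk}]₊ )`.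
Moreover the initial condition holds: the M-matrix of the initial cluster is the
identity, i.e. any nonzero Laurent expansions `r j` of the initial cluster variables
`x_j` satisfy `m_i(r j) = δ_{ij}`. -/
theorem mvector_final_seed_recursion {n : ℕ} (hn : 1 ≤ n)
    (B0 : Matrix (Fin n) (Fin n) ℤ) (w : List (Fin n)) (k : Fin n)
    (hnz : ∀ m : ℕ, ∀ i : Fin n, (seedAt B0 (w.take m)).2 i ≠ 0)
    (p : Fin n → LaurentPoly n) (p' : LaurentPoly n)
    (hp : ∀ l, IsLaurentExpansion (xinit n) (p l) ((seedAt B0 w).2 l))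
    (hp' : IsLaurentExpansion (xinit n) p' ((seedMut (seedAt B0 w) k).2 k))
    (hp0 : ∀ l, p l ≠ 0) (hp'0 : p' ≠ 0) :
    (∀ i : Fin n,
        maxExp p' hp'0 i =
          -maxExp (p k) (hp0 k) i +
            max (∑ l, maxExp (p l) (hp0 l) i * max ((seedAt B0 w).1 l k) 0)
              (∑ l, maxExp (p l) (hp0 l) i * max (-(seedAt B0 w).1 l k) 0)) ∧
    (∀ (r : Fin n → LaurentPoly n) (hr0 : ∀ j, r j ≠ 0),
        (∀ j, IsLaurentExpansion (xinit n) (r j) (xinit n j)) →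
        ∀ i j, maxExp (r j) (hr0 j) i = if i = j then 1 else 0) :=
  mvector_final_seed_recursion_general B0 w k p p' hp hp' hp0 hp'0
end
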